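/- arXiv:2312.00904 — 2 statements merged into one kernel-verified Lean document; each statement's English description precedes it below -/
import Mathlib

section
/- Let ζ ≪ λ be a probability measure on ℝ, (ξⁿ) Young measures from ([0,1], ν) to a compact E_X with ξⁿ → ξ narrowly, (Sⁿ) Borel functions on a compact E_Y with |Sⁿ| ≤ 1, and suppose forward convex combinations ∑ₖ λₙ,ₖ S^{n+k} converge λ-a.e. to a Borel function S. Then ∑ₖ λₙ,ₖ ∫∫∫ x·S^{n+k}(x+z) ζ(dz) ξ^{n+k}(v,dx) ν(dv) → ∫∫∫ x·S(x+z) ζ(dz) ξ(v,dx) ν(dv) as n → ∞. -/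
open MeasureTheory ProbabilityTheory Filter Finset Topology

/-!
Write `g = dζ/dλ` and let `ρ` be the law of `x` under `ν ⊗ ξ`. By Fubini the utility
`∫ x (∫ u(x + z) ζ(dz)) ρ(dx)` equals `∫ u(w) G(w) dw` with `G(w) = ∫ x g(w - x) ρ(dx)`.
Replacing `g` by a continuous compactly supported `h` with `‖g - h‖₁ ≤ δ` moves every such
utility by at most `Bδ` (`|x| ≤ B` on `E_X`), uniformly in `u` and `ρ`. For such `h`, narrow
convergence gives `G_m → G` pointwise with a common compactly supported bound, hence in `L¹`.
So `∑ₖ λₙ,ₖ ∫ S^{n+k} G_{n+k}` differs by `o(1)` from `∫ (∑ₖ λₙ,ₖ S^{n+k}) G`, which tends to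
`∫ S G` by dominated convergence.
-/

def forwardConvexComb (kn : ℕ → ℕ) (lam : ℕ → ℕ → ℝ) (a : ℕ → ℝ) (n : ℕ) : ℝ :=
  ∑ k ∈ range (kn n + 1), lam n k * a (n + k)

section ConvexComb

variable {kn : ℕ → ℕ} {lam : ℕ → ℕ → ℝ}

lemma forwardConvexComb_sub (a b : ℕ → ℝ) (n : ℕ) :
    forwardConvexComb kn lam (fun m => a m - b m) n
      = forwardConvexComb kn lam a n - forwardConvexComb kn lam b n := by
  simp only [forwardConvexComb, mul_sub, sum_sub_distrib]

lemma forwardConvexComb_const (hlam1 : ∀ n, ∑ k ∈ range (kn n + 1), lam n k = 1) (c : ℝ) (n : ℕ) :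
    forwardConvexComb kn lam (fun _ => c) n = c := by
  rw [forwardConvexComb, ← sum_mul, hlam1, one_mul]

lemma abs_forwardConvexComb_le (hlam0 : ∀ n k, 0 ≤ lam n k)
    (hlam1 : ∀ n, ∑ k ∈ range (kn n + 1), lam n k = 1) {a : ℕ → ℝ} {C : ℝ} {n : ℕ}
    (ha : ∀ k, |a (n + k)| ≤ C) : |forwardConvexComb kn lam a n| ≤ C :=
  calc |forwardConvexComb kn lam a n| ≤ ∑ k ∈ range (kn n + 1), |lam n k * a (n + k)| :=
        abs_sum_le_sum_abs _ _
    _ ≤ ∑ k ∈ range (kn n + 1), lam n k * C := by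
        gcongr with k
        rw [abs_mul, abs_of_nonneg (hlam0 n k)]
        exact mul_le_mul_of_nonneg_left (ha k) (hlam0 n k)
    _ = C := forwardConvexComb_const hlam1 C n

lemma tendsto_forwardConvexComb (hlam0 : ∀ n k, 0 ≤ lam n k)
    (hlam1 : ∀ n, ∑ k ∈ range (kn n + 1), lam n k = 1) {a : ℕ → ℝ} {L : ℝ}
    (ha : Tendsto a atTop (𝓝 L)) : Tendsto (forwardConvexComb kn lam a) atTop (𝓝 L) := by
  rw [Metric.tendsto_atTop] at ha ⊢
  intro ε hε
  obtain ⟨N, hN⟩ := ha (ε / 2) (half_pos hε)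
  refine ⟨N, fun n hn => ?_⟩
  have hdiff : |forwardConvexComb kn lam (fun m => a m - L) n| ≤ ε / 2 :=
    abs_forwardConvexComb_le hlam0 hlam1 fun k => (hN (n + k) (by omega)).le
  rw [forwardConvexComb_sub, forwardConvexComb_const hlam1] at hdiff
  exact hdiff.trans_lt (half_lt_self hε)

lemma integral_forwardConvexComb {α : Type*} [MeasurableSpace α] {μ : Measure α} {f : ℕ → α → ℝ}
    (hf : ∀ m, Integrable (f m) μ) (n : ℕ) :
    ∫ w, forwardConvexComb kn lam (fun m => f m w) n ∂μ
      = forwardConvexComb kn lam (fun m => ∫ w, f m w ∂μ) n := by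
  simp only [forwardConvexComb]
  rw [integral_finsetSum _ fun k _ => (hf (n + k)).const_mul _]
  simp only [integral_const_mul]

lemma ae_abs_le_one_of_tendsto_forwardConvexComb (hlam0 : ∀ n k, 0 ≤ lam n k)
    (hlam1 : ∀ n, ∑ k ∈ range (kn n + 1), lam n k = 1) {α : Type*} [MeasurableSpace α]
    {μ : Measure α} {S : ℕ → α → ℝ} {Slim : α → ℝ} (hSbdd : ∀ n y, |S n y| ≤ 1)
    (hae : ∀ᵐ y ∂μ, Tendsto (fun n => forwardConvexComb kn lam (fun m => S m y) n) atTop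
      (𝓝 (Slim y))) :
    ∀ᵐ y ∂μ, |Slim y| ≤ 1 := by
  filter_upwards [hae] with y hy
  exact le_of_tendsto' hy.abs fun n => abs_forwardConvexComb_le hlam0 hlam1 fun k => hSbdd _ y

theorem tendsto_forwardConvexComb_integral_mul (hlam0 : ∀ n k, 0 ≤ lam n k)
    (hlam1 : ∀ n, ∑ k ∈ range (kn n + 1), lam n k = 1) {α : Type*} [MeasurableSpace α]
    {μ : Measure α} {G : ℕ → α → ℝ} {Glim : α → ℝ} (hG : ∀ m, Integrable (G m) μ)
    (hGlim : Integrable Glim μ)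
    (hGconv : Tendsto (fun m => ∫ w, |G m w - Glim w| ∂μ) atTop (𝓝 0))
    {S : ℕ → α → ℝ} {Slim : α → ℝ} (hSmeas : ∀ n, AEStronglyMeasurable (S n) μ)
    (hSbdd : ∀ n y, |S n y| ≤ 1)
    (hae : ∀ᵐ y ∂μ, Tendsto (fun n => forwardConvexComb kn lam (fun m => S m y) n) atTop
      (𝓝 (Slim y))) :
    Tendsto (forwardConvexComb kn lam fun m => ∫ w, S m w * G m w ∂μ) atTop
      (𝓝 (∫ w, Slim w * Glim w ∂μ)) := by
  have hSnorm : ∀ m, ∀ᵐ w ∂μ, ‖S m w‖ ≤ 1 := fun m => ae_of_all _ (hSbdd m)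
  have hint : ∀ m (H : α → ℝ), Integrable H μ → Integrable (fun w => S m w * H w) μ :=
    fun m H hH => hH.bdd_mul (hSmeas m) (hSnorm m)
  have hreplace :
      Tendsto (fun m => ∫ w, S m w * G m w ∂μ - ∫ w, S m w * Glim w ∂μ) atTop (𝓝 0) := by
    refine squeeze_zero_norm (fun m => ?_) hGconv
    rw [← integral_sub (hint m _ (hG m)) (hint m _ hGlim)]
    refine norm_integral_le_of_norm_le ((hG m).sub hGlim).abs (ae_of_all _ fun w => ?_)
    rw [← mul_sub, norm_mul, Real.norm_eq_abs]
    exact mul_le_of_le_one_left (abs_nonneg _) (hSbdd m w)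
  have hlim : Tendsto (forwardConvexComb kn lam fun m => ∫ w, S m w * Glim w ∂μ) atTop
      (𝓝 (∫ w, Slim w * Glim w ∂μ)) := by
    have hpull : ∀ n, forwardConvexComb kn lam (fun m => ∫ w, S m w * Glim w ∂μ) n
        = ∫ w, forwardConvexComb kn lam (fun m => S m w) n * Glim w ∂μ := fun n => by
      rw [← integral_forwardConvexComb fun m => hint m _ hGlim]
      congr 1 with w
      simp only [forwardConvexComb, sum_mul, mul_assoc]
    refine Tendsto.congr (fun n => (hpull n).symm) ?_
    refine tendsto_integral_of_dominated_convergence (fun w => |Glim w|)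
      (fun n => ?_) hGlim.abs (fun n => ae_of_all _ fun w => ?_) ?_
    · exact ((Finset.aestronglyMeasurable_fun_sum _ fun k _ =>
        (hSmeas (n + k)).const_mul _)).mul hGlim.1
    · rw [norm_mul, Real.norm_eq_abs]
      exact mul_le_of_le_one_left (abs_nonneg _)
        (abs_forwardConvexComb_le hlam0 hlam1 fun k => hSbdd _ w)
    · filter_upwards [hae] with w hw using hw.mul_const _
  have hsum := (tendsto_forwardConvexComb hlam0 hlam1 hreplace).add hlim
  rw [zero_add] at hsum
  refine hsum.congr fun n => ?_
  rw [forwardConvexComb_sub, sub_add_cancel]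

end ConvexComb

section Translation

variable {ζ : Measure ℝ}

lemma integral_comp_add_eq_integral_mul_rnDeriv [SigmaFinite ζ] (hac : ζ ≪ volume)
    (u : ℝ → ℝ) (x : ℝ) :
    ∫ z, u (x + z) ∂ζ = ∫ w, u w * (ζ.rnDeriv volume (w - x)).toReal := by
  rw [← integral_rnDeriv_smul hac,
    ← integral_sub_right_eq_self (fun z => (ζ.rnDeriv volume z).toReal • u (x + z)) x]
  simp only [smul_eq_mul, add_sub_cancel, mul_comm]

lemma abs_integral_comp_add_le_one [IsProbabilityMeasure ζ] (hac : ζ ≪ volume) {u : ℝ → ℝ}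
    (hu : ∀ᵐ w, |u w| ≤ 1) (x : ℝ) : |∫ z, u (x + z) ∂ζ| ≤ 1 := by
  have hshift : ∀ᵐ z ∂ζ, ‖u (x + z)‖ ≤ 1 :=
    hac.ae_le ((measurePreserving_add_left volume x).quasiMeasurePreserving.ae hu)
  simpa using norm_integral_le_of_norm_le_const hshift

lemma abs_integral_mul_comp_sub_le {u h : ℝ → ℝ} (hu : ∀ᵐ w, |u w| ≤ 1) (hh : Integrable h)
    (x : ℝ) : |∫ w, u w * h (w - x)| ≤ ∫ w, |h w| := by
  rw [← integral_sub_right_eq_self (fun w => |h w|) x, ← Real.norm_eq_abs]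
  refine norm_integral_le_of_norm_le (hh.comp_sub_right x).abs ?_
  filter_upwards [hu] with w hw
  rw [norm_mul, Real.norm_eq_abs, Real.norm_eq_abs]
  exact mul_le_of_le_one_left (abs_nonneg _) hw

lemma abs_integral_comp_add_sub_integral_mul_le [IsFiniteMeasure ζ] (hac : ζ ≪ volume)
    {u h : ℝ → ℝ} (hum : AEStronglyMeasurable u) (hu : ∀ᵐ w, |u w| ≤ 1) (hh : Integrable h)
    (x : ℝ) :
    |∫ z, u (x + z) ∂ζ - ∫ w, u w * h (w - x)|
      ≤ ∫ w, |(ζ.rnDeriv volume w).toReal - h w| := by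
  have hu' : ∀ᵐ w, ‖u w‖ ≤ 1 := by simpa only [Real.norm_eq_abs] using hu
  have hg : Integrable fun w => (ζ.rnDeriv volume w).toReal := Measure.integrable_toReal_rnDeriv
  rw [integral_comp_add_eq_integral_mul_rnDeriv hac,
    ← integral_sub ((hg.comp_sub_right x).bdd_mul hum hu') ((hh.comp_sub_right x).bdd_mul hum hu')]
  simp only [← mul_sub]
  exact abs_integral_mul_comp_sub_le hu (hg.sub hh) x

end Translation

/-- The convolution of the signed measure `x • ρ` with `h`. For `h = dζ/dλ`, Fubini turns the
utility `∫ x * (∫ u (x + z) ∂ζ) ∂ρ` into `∫ u * momentConv ρ h`. -/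
noncomputable def momentConv (ρ : Measure ℝ) (h : ℝ → ℝ) (w : ℝ) : ℝ :=
  ∫ x, x * h (w - x) ∂ρ

section MomentConv

variable {ρ : Measure ℝ} {B : ℝ}

lemma stronglyMeasurable_momentConv [SFinite ρ] {h : ℝ → ℝ} (hhm : Measurable h) :
    StronglyMeasurable (momentConv ρ h) := by
  have : Measurable fun p : ℝ × ℝ => p.2 * h (p.1 - p.2) := by fun_prop
  exact this.stronglyMeasurable.integral_prod_right'

lemma integral_mul_integral_mul_comp_sub [IsFiniteMeasure ρ] (hρB : ∀ᵐ x ∂ρ, |x| ≤ B)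
    {u h : ℝ → ℝ} (hum : Measurable u) (hu : ∀ᵐ w, |u w| ≤ 1) (hhm : Measurable h)
    (hh : Integrable h) :
    ∫ x, x * (∫ w, u w * h (w - x)) ∂ρ = ∫ w, u w * momentConv ρ h w := by
  set F : ℝ → ℝ → ℝ := fun x w => u w * (x * h (w - x))
  have hFm : Measurable (Function.uncurry F) := by
    simp only [F, Function.uncurry_def]; fun_prop
  have hu' : ∀ᵐ w, ‖u w‖ ≤ 1 := by simpa only [Real.norm_eq_abs] using hu
  have hslice : ∀ x, ∫ w, ‖F x w‖ ≤ |x| * ∫ w, |h w| := fun x => by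
    rw [← integral_sub_right_eq_self (fun w => |h w|) x, ← integral_const_mul]
    refine integral_mono_of_nonneg (ae_of_all _ fun w => norm_nonneg _)
      ((hh.comp_sub_right x).abs.const_mul _) ?_
    filter_upwards [hu] with w hw
    simp only [F, norm_mul, Real.norm_eq_abs]
    exact mul_le_of_le_one_left (by positivity) hw
  have hF : Integrable (Function.uncurry F) (ρ.prod volume) := by
    rw [integrable_prod_iff hFm.aestronglyMeasurable]
    refine ⟨ae_of_all _ fun x => ((hh.comp_sub_right x).const_mul x).bdd_mul
      hum.aestronglyMeasurable hu', ?_⟩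
    refine Integrable.of_bound
      hFm.norm.stronglyMeasurable.integral_prod_right'.aestronglyMeasurable
      (B * ∫ w, |h w|) ?_
    filter_upwards [hρB] with x hx
    rw [Real.norm_of_nonneg (integral_nonneg fun w => norm_nonneg _)]
    exact (hslice x).trans (mul_le_mul_of_nonneg_right hx (integral_nonneg fun w => abs_nonneg _))
  calc ∫ x, x * (∫ w, u w * h (w - x)) ∂ρ = ∫ x, ∫ w, F x w ∂volume ∂ρ := by
        congr 1 with x
        rw [← integral_const_mul]
        congr 1 with w
        ring
    _ = ∫ w, ∫ x, F x w ∂ρ := integral_integral_swap hF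
    _ = ∫ w, u w * momentConv ρ h w := by
        simp only [F, integral_const_mul, momentConv]

end MomentConv

section Approximation

variable {ρ : Measure ℝ} {ζ : Measure ℝ} {B : ℝ}

lemma integrable_mul_integral_comp_add [IsFiniteMeasure ρ] (hρB : ∀ᵐ x ∂ρ, |x| ≤ B)
    [IsProbabilityMeasure ζ] (hac : ζ ≪ volume) {u : ℝ → ℝ} (hum : Measurable u)
    (hu : ∀ᵐ w, |u w| ≤ 1) :
    Integrable (fun x => x * ∫ z, u (x + z) ∂ζ) ρ := by
  have hm : Measurable fun x => ∫ z, u (x + z) ∂ζ :=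
    (hum.comp measurable_add).stronglyMeasurable.integral_prod_right'.measurable
  refine Integrable.of_bound (measurable_id.mul hm).aestronglyMeasurable B ?_
  filter_upwards [hρB] with x hx
  rw [norm_mul, Real.norm_eq_abs, Real.norm_eq_abs]
  exact (mul_le_of_le_one_right (abs_nonneg x) (abs_integral_comp_add_le_one hac hu x)).trans hx

lemma integrable_mul_integral_mul_comp_sub [IsFiniteMeasure ρ] (hρB : ∀ᵐ x ∂ρ, |x| ≤ B)
    {u h : ℝ → ℝ} (hum : Measurable u) (hu : ∀ᵐ w, |u w| ≤ 1) (hhm : Measurable h)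
    (hh : Integrable h) :
    Integrable (fun x => x * ∫ w, u w * h (w - x)) ρ := by
  have hm : Measurable fun x => ∫ w, u w * h (w - x) := by
    have : Measurable fun p : ℝ × ℝ => u p.2 * h (p.2 - p.1) := by fun_prop
    exact this.stronglyMeasurable.integral_prod_right'.measurable
  refine Integrable.of_bound (measurable_id.mul hm).aestronglyMeasurable (B * ∫ w, |h w|) ?_
  filter_upwards [hρB] with x hx
  rw [norm_mul, Real.norm_eq_abs, Real.norm_eq_abs]
  exact mul_le_mul hx (abs_integral_mul_comp_sub_le hu hh x) (abs_nonneg _)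
    ((abs_nonneg x).trans hx)

lemma abs_integral_mul_integral_comp_add_sub_le [IsProbabilityMeasure ρ]
    (hρB : ∀ᵐ x ∂ρ, |x| ≤ B) [IsProbabilityMeasure ζ] (hac : ζ ≪ volume) {u h : ℝ → ℝ}
    (hum : Measurable u) (hu : ∀ᵐ w, |u w| ≤ 1) (hhm : Measurable h) (hh : Integrable h) :
    |∫ x, x * (∫ z, u (x + z) ∂ζ) ∂ρ - ∫ w, u w * momentConv ρ h w|
      ≤ B * ∫ w, |(ζ.rnDeriv volume w).toReal - h w| := by
  rw [← integral_mul_integral_mul_comp_sub hρB hum hu hhm hh,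
    ← integral_sub (integrable_mul_integral_comp_add hρB hac hum hu)
      (integrable_mul_integral_mul_comp_sub hρB hum hu hhm hh)]
  have hbound : ∀ᵐ x ∂ρ, ‖x * (∫ z, u (x + z) ∂ζ) - x * ∫ w, u w * h (w - x)‖
      ≤ B * ∫ w, |(ζ.rnDeriv volume w).toReal - h w| := by
    filter_upwards [hρB] with x hx
    rw [← mul_sub, norm_mul, Real.norm_eq_abs, Real.norm_eq_abs]
    exact mul_le_mul hx
      (abs_integral_comp_add_sub_integral_mul_le hac hum.aestronglyMeasurable hu hh x)
      (abs_nonneg _) ((abs_nonneg x).trans hx)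
  simpa using norm_integral_le_of_norm_le_const hbound

end Approximation

def TendstoNarrowly (ρ : ℕ → Measure ℝ) (ρlim : Measure ℝ) : Prop :=
  ∀ f : ℝ → ℝ, Continuous f → (∃ M, ∀ x, |f x| ≤ M) →
    Tendsto (fun m => ∫ x, f x ∂ρ m) atTop (𝓝 (∫ x, f x ∂ρlim))

section CompactSupport

variable {h : ℝ → ℝ} {B : ℝ}

lemma exists_integrable_bound_momentConv (hcont : Continuous h) (hcs : HasCompactSupport h)
    (B : ℝ) :
    ∃ bound : ℝ → ℝ, Integrable bound ∧ ∀ (ρ : Measure ℝ) [IsProbabilityMeasure ρ],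
      (∀ᵐ x ∂ρ, |x| ≤ B) → ∀ w, |momentConv ρ h w| ≤ bound w := by
  obtain ⟨C, hC⟩ := hcont.bounded_above_of_compact_support hcs
  obtain ⟨R, hR⟩ := hcs.isCompact.isBounded.subset_closedBall 0
  refine ⟨(Metric.closedBall 0 (B + R)).indicator fun _ => B * C,
    (integrable_indicator_iff measurableSet_closedBall).2
      (integrableOn_const measure_closedBall_lt_top.ne), fun ρ _ hρB w => ?_⟩
  by_cases hw : w ∈ Metric.closedBall 0 (B + R)
  · rw [Set.indicator_of_mem hw]
    have hbd : ∀ᵐ x ∂ρ, ‖x * h (w - x)‖ ≤ B * C := by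
      filter_upwards [hρB] with x hx
      rw [norm_mul, Real.norm_eq_abs]
      exact mul_le_mul hx (hC _) (norm_nonneg _) ((abs_nonneg x).trans hx)
    simpa [momentConv] using norm_integral_le_of_norm_le_const hbd
  · rw [Set.indicator_of_notMem hw, momentConv, integral_eq_zero_of_ae, abs_zero]
    filter_upwards [hρB] with x hx
    -- `h (w - x) ≠ 0` would force `|w| ≤ |w - x| + |x| ≤ R + B`
    suffices w - x ∉ tsupport h by simp [image_eq_zero_of_notMem_tsupport this]
    intro hwx
    have hwxR := mem_closedBall_zero_iff.1 (hR hwx)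
    refine hw (mem_closedBall_zero_iff.2 ?_)
    rw [Real.norm_eq_abs] at hwxR ⊢
    linarith [abs_sub_abs_le_abs_sub w x]

lemma tendsto_momentConv {ρ : ℕ → Measure ℝ} {ρlim : Measure ℝ} (hρ : TendstoNarrowly ρ ρlim)
    (hcont : Continuous h) (hcs : HasCompactSupport h) (w : ℝ) :
    Tendsto (fun m => momentConv (ρ m) h w) atTop (𝓝 (momentConv ρlim h w)) := by
  have hf : Continuous fun x => x * h (w - x) := by fun_prop
  have hfs : HasCompactSupport fun x => x * h (w - x) :=
    (hcs.comp_homeomorph (Homeomorph.subLeft w)).mul_left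
  exact hρ _ hf (by simpa using hf.bounded_above_of_compact_support hfs)

lemma tendsto_integral_abs_momentConv_sub {ρ : ℕ → Measure ℝ} {ρlim : Measure ℝ}
    [∀ m, IsProbabilityMeasure (ρ m)] [IsProbabilityMeasure ρlim]
    (hρB : ∀ m, ∀ᵐ x ∂ρ m, |x| ≤ B) (hρlimB : ∀ᵐ x ∂ρlim, |x| ≤ B)
    (hρ : TendstoNarrowly ρ ρlim) (hcont : Continuous h) (hcs : HasCompactSupport h) :
    Tendsto (fun m => ∫ w, |momentConv (ρ m) h w - momentConv ρlim h w|) atTop (𝓝 0) := by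
  obtain ⟨bound, hbound_int, hbound⟩ := exists_integrable_bound_momentConv hcont hcs B
  have hmeas := fun (ρ' : Measure ℝ) [SFinite ρ'] =>
    stronglyMeasurable_momentConv (ρ := ρ') hcont.measurable
  have hlim := tendsto_integral_of_dominated_convergence (fun w => bound w + bound w)
    (F := fun m w => |momentConv (ρ m) h w - momentConv ρlim h w|) (f := 0)
    (fun m => ((hmeas (ρ m)).sub (hmeas ρlim)).aestronglyMeasurable.norm)
    (hbound_int.add hbound_int)
    (fun m => ae_of_all _ fun w => by
      rw [Real.norm_eq_abs, abs_abs]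
      exact (abs_sub _ _).trans (add_le_add (hbound _ (hρB m) w) (hbound _ hρlimB w)))
    (ae_of_all _ fun w => by
      simpa using ((tendsto_momentConv hρ hcont hcs w).sub_const (momentConv ρlim h w)).abs)
  simpa using hlim

end CompactSupport

lemma tendsto_of_forall_approx {a : ℕ → ℝ} {l : ℝ}
    (h : ∀ ε > 0, ∃ b : ℕ → ℝ, ∃ l', Tendsto b atTop (𝓝 l') ∧ (∀ n, |a n - b n| ≤ ε) ∧
      |l' - l| ≤ ε) :
    Tendsto a atTop (𝓝 l) := by
  refine Metric.tendsto_atTop.2 fun ε hε => ?_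
  obtain ⟨b, l', hb, hab, hl⟩ := h (ε / 4) (by positivity)
  obtain ⟨N, hN⟩ := Metric.tendsto_atTop.1 hb (ε / 4) (by positivity)
  refine ⟨N, fun n hn => ?_⟩
  have hbn := hN n hn
  rw [Real.dist_eq] at hbn ⊢
  linarith [abs_sub_le (a n) (b n) l, abs_sub_le (b n) l' l, hab n]

theorem tendsto_forwardConvexComb_integral_mul_integral_comp_add {kn : ℕ → ℕ} {lam : ℕ → ℕ → ℝ}
    (hlam0 : ∀ n k, 0 ≤ lam n k) (hlam1 : ∀ n, ∑ k ∈ range (kn n + 1), lam n k = 1)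
    {ζ : Measure ℝ} [IsProbabilityMeasure ζ] (hac : ζ ≪ volume)
    {ρ : ℕ → Measure ℝ} {ρlim : Measure ℝ} [∀ m, IsProbabilityMeasure (ρ m)]
    [IsProbabilityMeasure ρlim] {B : ℝ} (hρB : ∀ m, ∀ᵐ x ∂ρ m, |x| ≤ B)
    (hρlimB : ∀ᵐ x ∂ρlim, |x| ≤ B) (hρ : TendstoNarrowly ρ ρlim)
    {S : ℕ → ℝ → ℝ} {Slim : ℝ → ℝ} (hSmeas : ∀ n, Measurable (S n))
    (hSlimmeas : Measurable Slim) (hSbdd : ∀ n y, |S n y| ≤ 1)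
    (hae : ∀ᵐ y, Tendsto (fun n => forwardConvexComb kn lam (fun m => S m y) n) atTop
      (𝓝 (Slim y))) :
    Tendsto (forwardConvexComb kn lam fun m => ∫ x, x * (∫ z, S m (x + z) ∂ζ) ∂ρ m) atTop
      (𝓝 (∫ x, x * (∫ z, Slim (x + z) ∂ζ) ∂ρlim)) := by
  have hB : 0 ≤ B := by
    obtain ⟨x, hx⟩ := hρlimB.exists
    exact (abs_nonneg x).trans hx
  refine tendsto_of_forall_approx fun ε hε => ?_
  have hg : Integrable fun w => (ζ.rnDeriv volume w).toReal := Measure.integrable_toReal_rnDeriv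
  obtain ⟨h, hcs, hclose, hcont, hint⟩ :=
    hg.exists_hasCompactSupport_integral_sub_le (ε := ε / (B + 1)) (by positivity)
  have hBε : B * ∫ w, |(ζ.rnDeriv volume w).toReal - h w| ≤ ε := by
    simp only [Real.norm_eq_abs] at hclose
    calc _ ≤ B * (ε / (B + 1)) := mul_le_mul_of_nonneg_left hclose hB
      _ ≤ ε := by
        rw [mul_div_assoc', div_le_iff₀ (by positivity)]
        nlinarith
  have hkey : ∀ (ρ' : Measure ℝ) [IsProbabilityMeasure ρ'], (∀ᵐ x ∂ρ', |x| ≤ B) →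
      ∀ u : ℝ → ℝ, Measurable u → (∀ᵐ w, |u w| ≤ 1) →
      |∫ x, x * (∫ z, u (x + z) ∂ζ) ∂ρ' - ∫ w, u w * momentConv ρ' h w| ≤ ε :=
    fun ρ' _ hρ'B u hum hu =>
      (abs_integral_mul_integral_comp_add_sub_le hρ'B hac hum hu hcont.measurable hint).trans hBε
  obtain ⟨bound, hbound_int, hbound⟩ := exists_integrable_bound_momentConv hcont hcs B
  have hGint : ∀ (ρ' : Measure ℝ) [IsProbabilityMeasure ρ'], (∀ᵐ x ∂ρ', |x| ≤ B) →
      Integrable (momentConv ρ' h) := fun ρ' _ hρ'B =>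
    hbound_int.mono' (stronglyMeasurable_momentConv hcont.measurable).aestronglyMeasurable
      (ae_of_all _ fun w => (Real.norm_eq_abs _).trans_le (hbound ρ' hρ'B w))
  refine ⟨forwardConvexComb kn lam fun m => ∫ w, S m w * momentConv (ρ m) h w,
    ∫ w, Slim w * momentConv ρlim h w,
    tendsto_forwardConvexComb_integral_mul hlam0 hlam1 (fun m => hGint _ (hρB m)) (hGint _ hρlimB)
      (tendsto_integral_abs_momentConv_sub hρB hρlimB hρ hcont hcs)
      (fun n => (hSmeas n).aestronglyMeasurable) hSbdd hae, fun n => ?_, ?_⟩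
  · rw [← forwardConvexComb_sub]
    exact abs_forwardConvexComb_le hlam0 hlam1 fun k =>
      hkey _ (hρB _) _ (hSmeas _) (ae_of_all _ (hSbdd _))
  · rw [abs_sub_comm]
    exact hkey _ hρlimB _ hSlimmeas
      (ae_abs_le_one_of_tendsto_forwardConvexComb hlam0 hlam1 hSbdd hae)

lemma integral_comp_eq_integral_integral {α β E : Type*} [MeasurableSpace α] [MeasurableSpace β]
    [NormedAddCommGroup E] [NormedSpace ℝ E] {μ : Measure α} {κ : Kernel α β} {f : β → E}
    (hf : Integrable f (κ ∘ₘ μ)) :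
    ∫ y, f y ∂(κ ∘ₘ μ) = ∫ x, ∫ y, f y ∂κ x ∂μ := by
  rw [Measure.comp_eq_comp_const_apply] at hf ⊢
  simpa using Kernel.integral_comp hf

theorem convergence_of_utilities_general
    (xlo xhi : ℤ)
    (ν : Measure ℝ) [IsProbabilityMeasure ν]
    (ζ : Measure ℝ) [IsProbabilityMeasure ζ]
    (hac : ζ ≪ (volume : Measure ℝ))
    (κ : ℕ → Kernel ℝ ℝ) (κlim : Kernel ℝ ℝ)
    [∀ n, IsMarkovKernel (κ n)] [IsMarkovKernel κlim]
    (hκsupp : ∀ n v, (κ n v) (Set.Icc (xlo : ℝ) (xhi : ℝ))ᶜ = 0)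
    (hκsupplim : ∀ v, (κlim v) (Set.Icc (xlo : ℝ) (xhi : ℝ))ᶜ = 0)
    (hnarrow : ∀ A : Set ℝ, MeasurableSet A → ∀ f : ℝ → ℝ, Continuous f →
      (∃ M, ∀ x, |f x| ≤ M) →
      Tendsto (fun n => ∫ v in A, ∫ x, f x ∂(κ n v) ∂ν) atTop
        (nhds (∫ v in A, ∫ x, f x ∂(κlim v) ∂ν)))
    (S : ℕ → ℝ → ℝ) (Slim : ℝ → ℝ)
    (hSmeas : ∀ n, Measurable (S n)) (hSlimmeas : Measurable Slim)
    (hSbdd : ∀ n y, |S n y| ≤ 1)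
    (kn : ℕ → ℕ) (lam : ℕ → ℕ → ℝ)
    (hlam0 : ∀ n k, 0 ≤ lam n k)
    (hlam1 : ∀ n, ∑ k ∈ Finset.range (kn n + 1), lam n k = 1)
    (hae : ∀ᵐ y ∂(volume : Measure ℝ),
      Tendsto (fun n => ∑ k ∈ Finset.range (kn n + 1), lam n k * S (n + k) y)
        atTop (nhds (Slim y))) :
    Tendsto (fun n => ∑ k ∈ Finset.range (kn n + 1), lam n k *
        ∫ v, ∫ x, x * (∫ z, S (n + k) (x + z) ∂ζ) ∂(κ (n + k) v) ∂ν)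
      atTop
      (nhds (∫ v, ∫ x, x * (∫ z, Slim (x + z) ∂ζ) ∂(κlim v) ∂ν)) := by
  have hB : ∀ η : Kernel ℝ ℝ, (∀ v, η v (Set.Icc (xlo : ℝ) xhi)ᶜ = 0) →
      ∀ᵐ x ∂(η ∘ₘ ν), |x| ≤ max |(xlo : ℝ)| |(xhi : ℝ)| := fun η hη =>
    (Measure.ae_comp_of_ae_ae measurableSet_Icc (ae_of_all _ fun v => mem_ae_iff.2 (hη v))).mono
      fun x hx => abs_le_max_abs_abs hx.1 hx.2
  have hutility : ∀ (η : Kernel ℝ ℝ) [IsMarkovKernel η], (∀ v, η v (Set.Icc (xlo : ℝ) xhi)ᶜ = 0) →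
      ∀ u : ℝ → ℝ, Measurable u → (∀ᵐ w, |u w| ≤ 1) →
      ∫ v, ∫ x, x * (∫ z, u (x + z) ∂ζ) ∂η v ∂ν = ∫ x, x * (∫ z, u (x + z) ∂ζ) ∂(η ∘ₘ ν) :=
    fun η _ hη u hum hu => (integral_comp_eq_integral_integral
      (integrable_mul_integral_comp_add (hB η hη) hac hum hu)).symm
  have hρ : TendstoNarrowly (fun m => κ m ∘ₘ ν) (κlim ∘ₘ ν) := fun f hf ⟨M, hM⟩ => by
    have hint : ∀ (η : Kernel ℝ ℝ) [IsMarkovKernel η], Integrable f (η ∘ₘ ν) := fun η _ =>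
      Integrable.of_bound hf.aestronglyMeasurable M (ae_of_all _ hM)
    simpa [integral_comp_eq_integral_integral (hint _)] using
      hnarrow Set.univ MeasurableSet.univ f hf ⟨M, hM⟩
  rw [hutility κlim hκsupplim Slim hSlimmeas
    (ae_abs_le_one_of_tendsto_forwardConvexComb hlam0 hlam1 hSbdd hae)]
  refine (tendsto_forwardConvexComb_integral_mul_integral_comp_add hlam0 hlam1 hac
    (fun m => hB _ (hκsupp m)) (hB _ hκsupplim) hρ hSmeas hSlimmeas hSbdd hae).congr
    fun n => sum_congr rfl fun k _ => ?_
  rw [hutility _ (hκsupp _) _ (hSmeas _) (ae_of_all _ (hSbdd _))]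

/-- Convergence of the price part of the insider's expected utility along
forward convex combinations: if `ξⁿ → ξ` narrowly, `|Sⁿ| ≤ 1`, and the forward
convex combinations `∑ₖ λₙ,ₖ S^{n+k}` converge λ-a.e. to `S`, then the
corresponding convex combinations of the triple integrals converge. -/
theorem convergence_of_utilities
    (xlo xhi : ℤ) (hx : xlo < xhi)
    (ν : Measure ℝ) [IsProbabilityMeasure ν]
    (hν : ν (Set.Icc (0 : ℝ) 1)ᶜ = 0)
    (ζ : Measure ℝ) [IsProbabilityMeasure ζ]
    (hζsupp : ζ (Set.Icc (-1 : ℝ) 1)ᶜ = 0)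
    (hac : ζ ≪ (volume : Measure ℝ))
    (κ : ℕ → Kernel ℝ ℝ) (κlim : Kernel ℝ ℝ)
    [∀ n, IsMarkovKernel (κ n)] [IsMarkovKernel κlim]
    (hκsupp : ∀ n v, (κ n v) (Set.Icc (xlo : ℝ) (xhi : ℝ))ᶜ = 0)
    (hκsupplim : ∀ v, (κlim v) (Set.Icc (xlo : ℝ) (xhi : ℝ))ᶜ = 0)
    (hnarrow : ∀ A : Set ℝ, MeasurableSet A → ∀ f : ℝ → ℝ, Continuous f →
      (∃ M, ∀ x, |f x| ≤ M) →
      Tendsto (fun n => ∫ v in A, ∫ x, f x ∂(κ n v) ∂ν) atTop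
        (nhds (∫ v in A, ∫ x, f x ∂(κlim v) ∂ν)))
    (S : ℕ → ℝ → ℝ) (Slim : ℝ → ℝ)
    (hSmeas : ∀ n, Measurable (S n)) (hSlimmeas : Measurable Slim)
    (hSbdd : ∀ n y, |S n y| ≤ 1)
    (kn : ℕ → ℕ) (lam : ℕ → ℕ → ℝ)
    (hlam0 : ∀ n k, 0 ≤ lam n k)
    (hlam1 : ∀ n, ∑ k ∈ Finset.range (kn n + 1), lam n k = 1)
    (hae : ∀ᵐ y ∂(volume : Measure ℝ),
      Tendsto (fun n => ∑ k ∈ Finset.range (kn n + 1), lam n k * S (n + k) y)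
        atTop (nhds (Slim y))) :
    Tendsto (fun n => ∑ k ∈ Finset.range (kn n + 1), lam n k *
        ∫ v, ∫ x, x * (∫ z, S (n + k) (x + z) ∂ζ) ∂(κ (n + k) v) ∂ν)
      atTop
      (nhds (∫ v, ∫ x, x * (∫ z, Slim (x + z) ∂ζ) ∂(κlim v) ∂ν)) :=
  convergence_of_utilities_general xlo xhi ν ζ hac κ κlim hκsupp hκsupplim hnarrow S Slim hSmeas
    hSlimmeas hSbdd kn lam hlam0 hlam1 hae
end

section
/- Let (Sⁿ) be a sequence of Borel-measurable functions from a compact interval E_Y ⊆ ℝ to [0,1]. Then there exist forward convex combinations ∑_{k=0}^{kₙ} λₙ,ₖ S^{n+k} (with λₙ,ₖ ≥ 0 summing to 1) and a Borel-measurable S : E_Y → [0,1] such that ∑_{k=0}^{kₙ} λₙ,ₖ S^{n+k} → S Lebesgue-almost everywhere. -/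
open MeasureTheory Filter Finset
open scoped ENNReal InnerProductSpace Topology

/-! The functions form a bounded sequence in the Hilbert space `L²`. Along an ultrafilter finer
than `atTop` it has a weak limit `x` (Riesz representation of the limit of inner products),
and by Mazur's lemma `x` lies in the norm closure of the convex hull of every tail. Choosing
forward convex combinations `g m` from the `m`-th tail that converge to `x` in `L²`, a
subsequence `g (n_j)` converges almost everywhere; since `n_j ≥ j`, `g (n_j)` is also a
combination from the `j`-th tail, and this gives the required forward convex combinations.
Their values lie in `[0,1]`, hence so does the a.e. limit, which can therefore be clamped to
`[0,1]` everywhere. -/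

lemma range_add_subset_range_add {β : Type*} (f : ℕ → β) {m n : ℕ} (h : n ≤ m) :
    (Set.range fun k => f (m + k)) ⊆ Set.range fun k => f (n + k) := by
  rintro _ ⟨k, rfl⟩
  exact ⟨m - n + k, by simp only [← add_assoc, Nat.add_sub_cancel' h]⟩

lemma exists_sum_range_eq_of_mem_convexHull_range {R E : Type*} [Field R] [LinearOrder R]
    [IsStrictOrderedRing R] [AddCommGroup E] [Module R E] {v : ℕ → E} {x : E}
    (hx : x ∈ convexHull R (Set.range v)) :
    ∃ (K : ℕ) (lam : ℕ → R), (∀ k, 0 ≤ lam k) ∧ ∑ k ∈ range (K + 1), lam k = 1 ∧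
      ∑ k ∈ range (K + 1), lam k • v k = x := by
  classical
  rw [convexHull_range_eq_exists_affineCombination] at hx
  obtain ⟨s, w, hw₀, hw₁, rfl⟩ := hx
  have hs : range (s.sup id + 1) ∩ s = s :=
    inter_eq_right.2 fun k hk => mem_range_succ_iff.2 (le_sup (f := id) hk)
  refine ⟨s.sup id, fun k => if k ∈ s then w k else 0, fun k => ?_, ?_, ?_⟩
  · dsimp only
    split_ifs with hk
    exacts [hw₀ k hk, le_rfl]
  · rw [sum_ite_mem, hs, hw₁]
  · simp only [ite_smul, zero_smul]
    rw [sum_ite_mem, hs, s.affineCombination_eq_linear_combination v w hw₁]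

theorem mem_closure_convexHull_of_forall_tendsto_dual {E ι : Type*} [TopologicalSpace E]
    [AddCommGroup E] [Module ℝ E] [IsTopologicalAddGroup E] [ContinuousSMul ℝ E]
    [LocallyConvexSpace ℝ E] {l : Filter ι} [l.NeBot] {f : ι → E} {x : E} {s : Set E}
    (hfx : ∀ φ : StrongDual ℝ E, Tendsto (fun i => φ (f i)) l (𝓝 (φ x)))
    (hfs : ∀ᶠ i in l, f i ∈ s) :
    x ∈ closure (convexHull ℝ s) := by
  by_contra hx
  obtain ⟨φ, u, hlt, hux⟩ := geometric_hahn_banach_closed_point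
    (convex_convexHull ℝ s).closure isClosed_closure hx
  have hle : ∀ᶠ i in l, φ (f i) ≤ u :=
    hfs.mono fun i hi => (hlt _ (subset_closure (subset_convexHull ℝ s hi))).le
  exact hux.not_ge (le_of_tendsto (hfx φ) hle)

section Hilbert

variable {E : Type*} [NormedAddCommGroup E] [InnerProductSpace ℝ E] [CompleteSpace E]

theorem exists_tendsto_inner_of_norm_le {ι : Type*} (U : Ultrafilter ι) {f : ι → E} {M : ℝ}
    (hf : ∀ i, ‖f i‖ ≤ M) :
    ∃ x : E, ∀ y, Tendsto (fun i => ⟪f i, y⟫_ℝ) U (𝓝 ⟪x, y⟫_ℝ) := by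
  have hbdd : ∀ y i, ⟪f i, y⟫_ℝ ∈ Set.Icc (-(M * ‖y‖)) (M * ‖y‖) := fun y i =>
    abs_le.1 ((abs_real_inner_le_norm _ _).trans (by gcongr; exact hf i))
  have hlim : ∀ y, ∃ r, Tendsto (fun i => ⟪f i, y⟫_ℝ) U (𝓝 r) := fun y => by
    obtain ⟨r, -, hr⟩ := isCompact_Icc.ultrafilter_le_nhds (U.map fun i => ⟪f i, y⟫_ℝ)
      (le_principal_iff.2 (Ultrafilter.mem_map.2 (univ_mem' (hbdd y))))
    exact ⟨r, hr⟩
  choose r hr using hlim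
  let ℓ : StrongDual ℝ E := LinearMap.mkContinuous
    { toFun := r
      map_add' := fun y z => tendsto_nhds_unique (hr (y + z))
        (by simpa only [inner_add_right] using (hr y).add (hr z))
      map_smul' := fun c y => tendsto_nhds_unique (hr (c • y))
        (by simpa only [inner_smul_right, RingHom.id_apply, smul_eq_mul] using (hr y).const_mul c) }
    M fun y => abs_le.2 ⟨ge_of_tendsto (hr y) (univ_mem' fun i => (hbdd y i).1),
      le_of_tendsto (hr y) (univ_mem' fun i => (hbdd y i).2)⟩
  refine ⟨(InnerProductSpace.toDual ℝ E).symm ℓ, fun y => ?_⟩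
  rw [InnerProductSpace.toDual_symm_apply]
  exact hr y

theorem exists_tendsto_of_mem_convexHull_tail {f : ℕ → E} {M : ℝ} (hf : ∀ n, ‖f n‖ ≤ M) :
    ∃ (g : ℕ → E) (x : E), (∀ m, g m ∈ convexHull ℝ (Set.range fun k => f (m + k))) ∧
      Tendsto g atTop (𝓝 x) := by
  let U : Ultrafilter ℕ := Ultrafilter.of atTop
  obtain ⟨x, hx⟩ := exists_tendsto_inner_of_norm_le U hf
  have hweak : ∀ φ : StrongDual ℝ E, Tendsto (fun n => φ (f n)) U (𝓝 (φ x)) := fun φ => by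
    simpa only [real_inner_comm ((InnerProductSpace.toDual ℝ E).symm φ),
      InnerProductSpace.toDual_symm_apply] using hx ((InnerProductSpace.toDual ℝ E).symm φ)
  have hclosure : ∀ m, x ∈ closure (convexHull ℝ (Set.range fun k => f (m + k))) := fun m =>
    mem_closure_convexHull_of_forall_tendsto_dual hweak <|
      (eventually_ge_atTop m).filter_mono (Ultrafilter.of_le atTop) |>.mono fun n hn =>
        ⟨n - m, by simp only [Nat.add_sub_cancel' hn]⟩
  choose g hg hdist using fun m : ℕ =>
    Metric.mem_closure_iff.1 (hclosure m) (1 / (m + 1)) Nat.one_div_pos_of_nat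
  refine ⟨g, x, hg, tendsto_iff_dist_tendsto_zero.2 ?_⟩
  exact squeeze_zero (fun _ => dist_nonneg) (fun m => (dist_comm _ _).trans_le (hdist m).le)
    tendsto_one_div_add_atTop_nhds_zero_nat

end Hilbert

theorem MemLp.coeFn_sum_smul_toLp {α ι E : Type*} [MeasurableSpace α] {μ : Measure α}
    [NormedAddCommGroup E] [NormedSpace ℝ E] {p : ℝ≥0∞} [Fact (1 ≤ p)] {S : ι → α → E}
    (hS : ∀ i, MemLp (S i) p μ) (s : Finset ι) (c : ι → ℝ) :
    ⇑(∑ i ∈ s, c i • (hS i).toLp (S i)) =ᵐ[μ] fun y => ∑ i ∈ s, c i • S i y := by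
  have hterm : ∀ᵐ y ∂μ, ∀ i ∈ s, (c i • (hS i).toLp (S i)) y = c i • S i y :=
    s.eventually_all.2 fun i _ => by
      filter_upwards [Lp.coeFn_smul (c i) ((hS i).toLp (S i)), (hS i).coeFn_toLp] with y h1 h2
      rw [h1, Pi.smul_apply, h2]
  filter_upwards [Lp.coeFn_fun_finsetSum s fun i => c i • (hS i).toLp (S i), hterm] with y h1 h2
  rw [h1]
  exact sum_congr rfl h2

theorem exists_forward_convex_combinations_tendsto_ae {α : Type*} [MeasurableSpace α]
    {μ : Measure α} {S : ℕ → α → ℝ} {C : ℝ≥0∞} (hC : C ≠ ∞)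
    (hS : ∀ n, AEStronglyMeasurable (S n) μ) (hbdd : ∀ n, eLpNorm (S n) 2 μ ≤ C) :
    ∃ (kn : ℕ → ℕ) (lam : ℕ → ℕ → ℝ) (Slim : α → ℝ),
      (∀ n k, 0 ≤ lam n k) ∧ (∀ n, ∑ k ∈ range (kn n + 1), lam n k = 1) ∧ Measurable Slim ∧
      ∀ᵐ y ∂μ, Tendsto (fun n => ∑ k ∈ range (kn n + 1), lam n k * S (n + k) y)
        atTop (𝓝 (Slim y)) := by
  have hmem : ∀ n, MemLp (S n) 2 μ := fun n => ⟨hS n, (hbdd n).trans_lt hC.lt_top⟩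
  obtain ⟨g, x, hg, hgx⟩ := exists_tendsto_of_mem_convexHull_tail (f := fun n => (hmem n).toLp)
    fun n => by rw [Lp.norm_toLp]; exact ENNReal.toReal_mono hC (hbdd n)
  obtain ⟨ns, hns, hae⟩ := (tendstoInMeasure_of_tendsto_Lp hgx).exists_seq_tendsto_ae
  have htail : ∀ n, g (ns n) ∈ convexHull ℝ (Set.range fun k => (hmem (n + k)).toLp) :=
    fun n => convexHull_mono
      (range_add_subset_range_add (fun j => (hmem j).toLp) (hns.id_le n :)) (hg (ns n))
  choose kn lam hlam₀ hlam₁ hsum using fun n =>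
    exists_sum_range_eq_of_mem_convexHull_range (htail n)
  refine ⟨kn, lam, x, hlam₀, hlam₁, (Lp.stronglyMeasurable x).measurable, ?_⟩
  have hcoe : ∀ n, ⇑(g (ns n)) =ᵐ[μ] fun y => ∑ k ∈ range (kn n + 1), lam n k * S (n + k) y :=
    fun n => hsum n ▸ MemLp.coeFn_sum_smul_toLp (fun k => hmem (n + k)) _ (lam n)
  filter_upwards [hae, ae_all_iff.2 hcoe] with y hy hcoe
  simpa only [hcoe] using hy

theorem forward_convex_combinations_ae_convergence_general
    (a b : ℝ)
    (S : ℕ → ℝ → ℝ)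
    (hmeas : ∀ n, Measurable (S n))
    (hrange : ∀ n y, 0 ≤ S n y ∧ S n y ≤ 1) :
    ∃ (kn : ℕ → ℕ) (lam : ℕ → ℕ → ℝ) (Slim : ℝ → ℝ),
      (∀ n k, 0 ≤ lam n k) ∧
      (∀ n, ∑ k ∈ Finset.range (kn n + 1), lam n k = 1) ∧
      Measurable Slim ∧ (∀ y, 0 ≤ Slim y ∧ Slim y ≤ 1) ∧
      ∀ᵐ y ∂(volume : Measure ℝ), y ∈ Set.Icc a b →
        Tendsto (fun n => ∑ k ∈ Finset.range (kn n + 1), lam n k * S (n + k) y)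
          atTop (nhds (Slim y)) := by
  set μ := volume.restrict (Set.Icc a b)
  obtain ⟨kn, lam, f, hlam₀, hlam₁, hf, hconv⟩ :=
    exists_forward_convex_combinations_tendsto_ae (μ := μ) (S := S)
      (C := μ Set.univ ^ (2 : ℝ≥0∞).toReal⁻¹ * ENNReal.ofReal 1)
      (by finiteness) (fun n => (hmeas n).aestronglyMeasurable) fun n =>
        eLpNorm_le_of_ae_bound (ae_of_all _ fun y => by
          rw [Real.norm_eq_abs, abs_le]
          exact ⟨by linarith [(hrange n y).1], (hrange n y).2⟩)
  refine ⟨kn, lam, fun y => max 0 (min 1 (f y)), hlam₀, hlam₁, by fun_prop,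
    fun y => ⟨le_max_left _ _, max_le zero_le_one (min_le_left _ _)⟩, ?_⟩
  rw [← ae_restrict_iff' measurableSet_Icc]
  filter_upwards [hconv] with y hy
  have hcomb : ∀ n, ∑ k ∈ range (kn n + 1), lam n k * S (n + k) y ∈ Set.Icc (0 : ℝ) 1 :=
    fun n => (convex_Icc 0 1).sum_mem (fun k _ => hlam₀ n k) (hlam₁ n)
      fun k _ => hrange (n + k) y
  obtain ⟨h0, h1⟩ := isClosed_Icc.mem_of_tendsto hy (Eventually.of_forall hcomb)
  rwa [min_eq_right h1, max_eq_right h0]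

/-- Komlós-type lemma (Delbaen–Schachermayer): for a uniformly bounded sequence
of measurable `[0,1]`-valued functions on a compact interval there exist
forward convex combinations converging Lebesgue-almost everywhere to a
measurable `[0,1]`-valued limit. -/
theorem forward_convex_combinations_ae_convergence
    (a b : ℝ) (hab : a < b)
    (S : ℕ → ℝ → ℝ)
    (hmeas : ∀ n, Measurable (S n))
    (hrange : ∀ n y, 0 ≤ S n y ∧ S n y ≤ 1) :
    ∃ (kn : ℕ → ℕ) (lam : ℕ → ℕ → ℝ) (Slim : ℝ → ℝ),
      (∀ n k, 0 ≤ lam n k) ∧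
      (∀ n, ∑ k ∈ Finset.range (kn n + 1), lam n k = 1) ∧
      Measurable Slim ∧ (∀ y, 0 ≤ Slim y ∧ Slim y ≤ 1) ∧
      ∀ᵐ y ∂(volume : Measure ℝ), y ∈ Set.Icc a b →
        Tendsto (fun n => ∑ k ∈ Finset.range (kn n + 1), lam n k * S (n + k) y)
          atTop (nhds (Slim y)) :=
  forward_convex_combinations_ae_convergence_general a b S hmeas hrange
end
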